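/- arXiv:1712.09019 — 5 statements merged into one kernel-verified Lean document; each statement's English description precedes it below -/
import Mathlib

section
/- Let m be a positive integer and let n, x, y be rational integers satisfying n ≥ 3, max{|x|,|y|} ≥ 2 and Φ_n(x,y) = m. Then φ(n) ≤ (2/log 3)·log m and max{|x|,|y|} ≤ (2/√3)·m^{1/φ(n)}. -/
/-- The cyclotomic binary form `Φₙ(X,Y) = Y^{φ(n)} φₙ(X/Y)`, evaluated at integers. -/
noncomputable def cycBinaryForm (n : ℕ) (x y : ℤ) : ℤ :=
  ∑ i ∈ Finset.range (n.totient + 1),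
    (Polynomial.cyclotomic n ℤ).coeff i * x ^ i * y ^ (n.totient - i)

/-!
Write `T = max 1 |t|`. The heart of the matter is the bound `(√3/2 · T)^φ(n) ≤ φₙ(t)` for every
real `t` and `n ≥ 3`; by homogeneity it becomes `(√3/2 · max |x| |y|)^φ(n) ≤ Φₙ(x, y)`, and both
inequalities follow from it because `max |x| |y| ≥ 2`.

The bound is proved by strong induction on `n`. If `p² ∣ n` then `φₙ(t) = φ_{n/p}(t^p)`; if
`n = 2m` with `m` odd then `φₙ(t) = φₘ(-t)`; if a prime `p ≥ 7` divides a squarefree odd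
`n = rp` with `r > 1`, then `φₙ(t) φᵣ(t) = φᵣ(t^p)`, and the crude estimate
`φᵣ(t) ≤ (1 + |t|)^φ(r) ≤ (2T)^φ(r)` costs a factor `2` that `2 (√3/2)^(p-1) ≤ √3/2` absorbs.
What is left is `n` a prime `≥ 7`, where `φₙ(t) = (t^n - 1)/(t - 1)`, and `n ∈ {3, 4, 5, 15}`,
checked by explicit polynomial inequalities.
-/

open Polynomial

theorem IsPrimitiveRoot.neg_of_odd {R : Type*} [CommRing R] [IsDomain R] {ζ : R} {m : ℕ}
    (hζ : IsPrimitiveRoot ζ m) (hm : Odd m) (hR : ringChar R ≠ 2) :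
    IsPrimitiveRoot (-ζ) (2 * m) := by
  have h2 : orderOf (-1 : R) = 2 := by rw [orderOf_neg_one, if_neg hR]
  have hcop : (orderOf (-1 : R)).Coprime (orderOf ζ) := by
    rw [h2, ← hζ.eq_orderOf]; exact Nat.coprime_two_left.mpr hm
  rw [IsPrimitiveRoot.iff_orderOf, neg_eq_neg_one_mul,
    (Commute.all _ _).orderOf_mul_eq_mul_orderOf_of_coprime hcop, h2, ← hζ.eq_orderOf]

theorem cyclotomic_two_mul_complex {m : ℕ} (hm : Odd m) (h : 2 < m) :
    cyclotomic (2 * m) ℂ = (cyclotomic m ℂ).comp (-X) := by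
  have hζ := Complex.isPrimitiveRoot_exp m (by omega)
  have hchar : ringChar ℂ ≠ 2 := by rw [ringChar.eq_zero]; norm_num
  have hζ' := hζ.neg_of_odd hm hchar
  have himage : (primitiveRoots m ℂ).image Neg.neg = primitiveRoots (2 * m) ℂ := by
    refine Finset.eq_of_subset_of_card_le (fun μ hμ => ?_) ?_
    · obtain ⟨ν, hν, rfl⟩ := Finset.mem_image.mp hμ
      rw [mem_primitiveRoots (by omega)] at hν ⊢
      exact hν.neg_of_odd hm hchar
    · rw [Finset.card_image_of_injective _ neg_injective, hζ.card_primitiveRoots,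
        hζ'.card_primitiveRoots, Nat.totient_mul (Nat.coprime_two_left.mpr hm), Nat.totient_two,
        one_mul]
  have hcomp : ∀ μ : ℂ, (X - C μ).comp (-X) = -(X - C (-μ)) := fun μ => by
    simp only [sub_comp, X_comp, C_comp, map_neg]; ring
  rw [cyclotomic_eq_prod_X_sub_primitiveRoots hζ', cyclotomic_eq_prod_X_sub_primitiveRoots hζ,
    ← himage, Finset.prod_image (fun _ _ _ _ h => neg_injective h), prod_comp]
  simp_rw [hcomp, Finset.prod_neg, hζ.card_primitiveRoots, (Nat.totient_even h).neg_one_pow,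
    one_mul]

theorem cyclotomic_two_mul {m : ℕ} (hm : Odd m) (h : 2 < m) (R : Type*) [CommRing R] :
    cyclotomic (2 * m) R = (cyclotomic m R).comp (-X) := by
  have hℤ : cyclotomic (2 * m) ℤ = (cyclotomic m ℤ).comp (-X) := by
    apply map_injective (Int.castRingHom ℂ) Int.cast_injective
    simp [map_comp, cyclotomic_two_mul_complex hm h]
  rw [← map_cyclotomic_int, hℤ, map_comp, map_cyclotomic_int]
  simp

theorem eval_cyclotomic_le_one_add_abs_pow {n : ℕ} (hn : n ≠ 0) (t : ℝ) :
    (cyclotomic n ℝ).eval t ≤ (1 + |t|) ^ n.totient := by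
  have hζ := Complex.isPrimitiveRoot_exp n hn
  have hfactor : ∀ μ ∈ primitiveRoots n ℂ, ‖(t : ℂ) - μ‖ ≤ 1 + |t| := fun μ hμ => by
    have hμ1 : ‖μ‖ = 1 := Complex.norm_eq_one_of_pow_eq_one
      ((mem_primitiveRoots (Nat.pos_of_ne_zero hn)).mp hμ).pow_eq_one hn
    calc ‖(t : ℂ) - μ‖ ≤ ‖(t : ℂ)‖ + ‖μ‖ := norm_sub_le _ _
      _ = 1 + |t| := by rw [hμ1, Complex.norm_real, Real.norm_eq_abs, add_comm]
  calc (cyclotomic n ℝ).eval t ≤ ‖(((cyclotomic n ℝ).eval t : ℝ) : ℂ)‖ := by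
        rw [Complex.norm_real, Real.norm_eq_abs]; exact le_abs_self _
    _ = ∏ μ ∈ primitiveRoots n ℂ, ‖(t : ℂ) - μ‖ := by
        rw [← cyclotomic.eval_apply_ofReal, cyclotomic_eq_prod_X_sub_primitiveRoots hζ, eval_prod,
          norm_prod]
        simp
    _ ≤ (1 + |t|) ^ n.totient := by
        rw [← hζ.card_primitiveRoots, ← Finset.prod_const]
        exact Finset.prod_le_prod (fun _ _ => norm_nonneg _) hfactor

lemma max_one_abs_pow (t : ℝ) (k : ℕ) : max 1 |t| ^ k = max 1 |t ^ k| := by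
  rw [abs_pow]
  rcases le_total |t| 1 with h | h
  · rw [max_eq_left h, one_pow, max_eq_left (pow_le_one₀ (abs_nonneg t) h)]
  · rw [max_eq_right h, max_eq_right (one_le_pow₀ h)]

lemma sqrt_three_div_two_sq : (√3 / 2) ^ 2 = 3 / 4 := by
  rw [div_pow, Real.sq_sqrt (by norm_num)]; norm_num

lemma sqrt_three_div_two_le_one : √3 / 2 ≤ 1 := by
  nlinarith [sqrt_three_div_two_sq, Real.sqrt_nonneg 3]

lemma two_mul_sqrt_three_div_two_pow_le {k : ℕ} (hk : 6 ≤ k) : 2 * (√3 / 2) ^ k ≤ √3 / 2 := by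
  have h6 : (√3 / 2) ^ 6 = 27 / 64 := by
    rw [show 6 = 2 * 3 by rfl, pow_mul, sqrt_three_div_two_sq]; norm_num
  have hk6 := pow_le_pow_of_le_one (by positivity) sqrt_three_div_two_le_one hk
  nlinarith [sqrt_three_div_two_sq, Real.sqrt_nonneg 3]

lemma sqrt_three_div_two_pow_le_half {k : ℕ} (hk : 6 ≤ k) : (√3 / 2) ^ k ≤ 1 / 2 := by
  linarith [two_mul_sqrt_three_div_two_pow_le hk, sqrt_three_div_two_le_one]

def CyclotomicLowerBound (n : ℕ) : Prop :=
  ∀ t : ℝ, (√3 / 2 * max 1 |t|) ^ n.totient ≤ (cyclotomic n ℝ).eval t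

lemma cyclotomicLowerBound_of_totient_eq {n j : ℕ} (hj : n.totient = 2 * j)
    (h : ∀ t : ℝ, (3 / 4) ^ j * max 1 |t| ^ (2 * j) ≤ (cyclotomic n ℝ).eval t) :
    CyclotomicLowerBound n := fun t => by
  rw [hj, mul_pow, pow_mul, sqrt_three_div_two_sq]
  exact h t

lemma cyclotomicLowerBound_three : CyclotomicLowerBound 3 := by
  refine cyclotomicLowerBound_of_totient_eq (j := 1) (by decide) fun t => ?_
  rw [cyclotomic_three]
  simp only [eval_add, eval_pow, eval_X, eval_one]
  rcases le_total |t| 1 with h | h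
  · rw [max_eq_left h]
    nlinarith [abs_le.mp h, sq_nonneg (2 * t + 1)]
  · rw [max_eq_right h, pow_mul, sq_abs]
    cases abs_cases t <;> nlinarith [sq_nonneg (t + 2), sq_nonneg (t - 2)]

lemma cyclotomicLowerBound_four : CyclotomicLowerBound 4 := by
  refine cyclotomicLowerBound_of_totient_eq (j := 1) (by decide) fun t => ?_
  rw [show 4 = 2 * 2 by rfl, ← cyclotomic_expand_eq_cyclotomic Nat.prime_two dvd_rfl, expand_eval,
    cyclotomic_two]
  simp only [eval_add, eval_X, eval_one]
  rcases le_total |t| 1 with h | h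
  · rw [max_eq_left h]; nlinarith [sq_nonneg t]
  · rw [max_eq_right h, pow_mul, sq_abs]; nlinarith [sq_nonneg t]

lemma cyclotomicLowerBound_five : CyclotomicLowerBound 5 := by
  have : Fact (Nat.Prime 5) := ⟨by norm_num⟩
  refine cyclotomicLowerBound_of_totient_eq (j := 2) (by decide) fun t => ?_
  rw [cyclotomic_prime, eval_geom_sum]
  simp only [Finset.sum_range_succ, Finset.sum_range_zero]
  rcases le_total |t| 1 with h | h
  · rw [max_eq_left h]
    nlinarith [abs_le.mp h, sq_nonneg (t + 1), sq_nonneg t, sq_nonneg (t ^ 2 + t),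
      sq_nonneg (t ^ 2 - 1)]
  · rw [max_eq_right h]
    rcases abs_cases t with ⟨he, ht⟩ | ⟨he, ht⟩ <;> rw [he]
    · nlinarith [sq_nonneg (t - 1), sq_nonneg t]
    · nlinarith [sq_nonneg (t ^ 2 + 8 / 7 * t), sq_nonneg (t + 1), sq_nonneg (t ^ 2 - 1),
        sq_nonneg t]

lemma eval_cyclotomic_fifteen (t : ℝ) :
    (cyclotomic 15 ℝ).eval t = t ^ 8 - t ^ 7 + t ^ 5 - t ^ 4 + t ^ 3 - t + 1 := by
  have h := congrArg (eval t)
    (cyclotomic_expand_eq_cyclotomic_mul (p := 5) (n := 3) (by norm_num) (by norm_num) ℝ)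
  rw [expand_eval, eval_mul, cyclotomic_three] at h
  simp only [eval_add, eval_pow, eval_X, eval_one] at h
  have h3 : 0 < t ^ 2 + t + 1 := by nlinarith [sq_nonneg (2 * t + 1)]
  refine mul_right_cancel₀ h3.ne' (h.symm.trans ?_)
  ring

lemma cyclotomicLowerBound_fifteen : CyclotomicLowerBound 15 := by
  refine cyclotomicLowerBound_of_totient_eq (j := 4) (by decide) fun t => ?_
  rw [eval_cyclotomic_fifteen]
  rcases le_total |t| 1 with h | h
  · rw [max_eq_left h]
    have h1 := abs_le.mp h
    nlinarith [sq_nonneg (t - 1), sq_nonneg (t + 1), sq_nonneg t, sq_nonneg (t ^ 2 - 1),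
      sq_nonneg (t ^ 3 - t), sq_nonneg (t ^ 4 - t ^ 2), pow_le_one₀ (abs_nonneg t) h (n := 8),
      sq_nonneg (t ^ 3 - 1 / 2), sq_nonneg (t ^ 4 - 1 / 2)]
  · rw [max_eq_right h]
    rcases abs_cases t with ⟨he, ht⟩ | ⟨he, ht⟩ <;> rw [he]
    · nlinarith [sq_nonneg (t ^ 4 - t ^ 3), sq_nonneg (t ^ 2 - t), sq_nonneg (t ^ 3 - t ^ 2),
        one_le_pow₀ (by linarith : (1 : ℝ) ≤ t) (n := 4), sq_nonneg (t ^ 4 - 1)]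
    · nlinarith [sq_nonneg (t ^ 4 + t ^ 3), sq_nonneg (t ^ 2 + t), sq_nonneg (t ^ 3 + t ^ 2),
        sq_nonneg (t ^ 4 - 1), sq_nonneg (t ^ 4 + 128 / 175 * t), sq_nonneg t]

theorem cyclotomicLowerBound_prime {p : ℕ} (hp : p.Prime) (hp7 : 7 ≤ p) :
    CyclotomicLowerBound p := by
  have := Fact.mk hp
  intro t
  have hsum : (cyclotomic p ℝ).eval t = ∑ i ∈ Finset.range p, t ^ i := by
    rw [cyclotomic_prime, eval_geom_sum]
  have hgeom : (cyclotomic p ℝ).eval t * (t - 1) = t ^ p - 1 := by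
    simpa using congrArg (eval t) (cyclotomic_prime_mul_X_sub_one ℝ p)
  have hodd : Odd p := hp.odd_of_ne_two (by omega)
  set G := (cyclotomic p ℝ).eval t
  obtain ⟨k, rfl⟩ : ∃ k, p = k + 1 := ⟨p - 1, by omega⟩
  rw [Nat.totient_prime hp, Nat.add_sub_cancel]
  have hck : (√3 / 2) ^ k ≤ 1 / 2 := sqrt_three_div_two_pow_le_half (by omega)
  rcases le_or_gt 1 t with ht | ht
  · rw [abs_of_nonneg (by linarith), max_eq_right ht]
    calc (√3 / 2 * t) ^ k ≤ t ^ k :=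
          pow_le_pow_left₀ (by positivity) (by nlinarith [sqrt_three_div_two_le_one]) k
      _ ≤ G := hsum ▸ Finset.single_le_sum (fun i _ => pow_nonneg (by linarith) i)
          (Finset.self_mem_range_succ k)
  rcases le_or_gt t (-1) with ht' | ht'
  · rw [abs_of_neg (by linarith), max_eq_right (by linarith)]
    have hid : G * (-t + 1) = (-t) ^ (k + 1) + 1 := by
      rw [hodd.neg_pow]; linear_combination -hgeom
    have hmono : (-t) ^ k ≤ (-t) ^ (k + 1) := pow_le_pow_right₀ (by linarith) (by omega)
    have hhalf : 1 / 2 * (-t) ^ k * (-t + 1) ≤ G * (-t + 1) := by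
      rw [hid]; nlinarith [pow_succ (-t) k, one_le_pow₀ (by linarith : (1 : ℝ) ≤ -t) (n := k)]
    calc (√3 / 2 * -t) ^ k = (√3 / 2) ^ k * (-t) ^ k := mul_pow _ _ _
      _ ≤ 1 / 2 * (-t) ^ k := mul_le_mul_of_nonneg_right hck (pow_nonneg (by linarith) k)
      _ ≤ G := le_of_mul_le_mul_right hhalf (by linarith)
  · rw [max_eq_left (abs_le.mpr ⟨by linarith, by linarith⟩), mul_one]
    have htp : t ^ (k + 1) ≤ (1 + t) / 2 := by
      rcases le_or_gt 0 t with h0 | h0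
      · linarith [pow_le_pow_of_le_one h0 ht.le (show 1 ≤ k + 1 by omega), pow_one t]
      · linarith [hodd.pow_nonpos h0.le]
    have hid : G * (1 - t) = 1 - t ^ (k + 1) := by linear_combination -hgeom
    have hhalf : 1 / 2 * (1 - t) ≤ G * (1 - t) := by rw [hid]; linarith
    exact hck.trans (le_of_mul_le_mul_right hhalf (by linarith))

namespace CyclotomicLowerBound

theorem mul_of_dvd {p q : ℕ} (hp : p.Prime) (hpq : p ∣ q) (h : CyclotomicLowerBound q) :
    CyclotomicLowerBound (q * p) := fun t => by
  rw [← cyclotomic_expand_eq_cyclotomic hp hpq, expand_eval, mul_comm q p,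
    Nat.totient_mul_of_prime_of_dvd hp hpq]
  calc (√3 / 2 * max 1 |t|) ^ (p * q.totient)
      ≤ (√3 / 2) ^ q.totient * max 1 |t| ^ (p * q.totient) := by
        rw [mul_pow]
        exact mul_le_mul_of_nonneg_right (pow_le_pow_of_le_one (by positivity)
          sqrt_three_div_two_le_one (Nat.le_mul_of_pos_left _ hp.pos)) (by positivity)
    _ = (√3 / 2 * max 1 |t ^ p|) ^ q.totient := by rw [mul_pow, ← max_one_abs_pow, ← pow_mul]
    _ ≤ _ := h (t ^ p)

theorem two_mul {m : ℕ} (hm : Odd m) (h2 : 2 < m) (h : CyclotomicLowerBound m) :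
    CyclotomicLowerBound (2 * m) := fun t => by
  rw [cyclotomic_two_mul hm h2, eval_comp, Nat.totient_mul (Nat.coprime_two_left.mpr hm),
    Nat.totient_two, one_mul]
  simpa using h (-t)

theorem mul_prime {p r : ℕ} (hp : p.Prime) (hp7 : 7 ≤ p) (hpr : ¬p ∣ r) (hr : 2 < r)
    (h : CyclotomicLowerBound r) : CyclotomicLowerBound (r * p) := fun t => by
  set T := max 1 |t|
  have hfactor : (cyclotomic (r * p) ℝ).eval t * (cyclotomic r ℝ).eval t =
      (cyclotomic r ℝ).eval (t ^ p) := by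
    rw [← eval_mul, ← cyclotomic_expand_eq_cyclotomic_mul hp hpr, expand_eval]
  have hlower : (√3 / 2 * T ^ p) ^ r.totient ≤ (cyclotomic r ℝ).eval (t ^ p) := by
    rw [max_one_abs_pow]; exact h (t ^ p)
  have hupper : (cyclotomic r ℝ).eval t ≤ (2 * T) ^ r.totient :=
    (eval_cyclotomic_le_one_add_abs_pow (by omega) t).trans
      (pow_le_pow_left₀ (by positivity) (by linarith [le_max_left 1 |t|, le_max_right 1 |t|]) _)
  rw [Nat.totient_mul (hp.coprime_iff_not_dvd.mpr hpr).symm, Nat.totient_prime hp]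
  obtain ⟨k, rfl⟩ : ∃ k, p = k + 1 := ⟨p - 1, by omega⟩
  rw [Nat.add_sub_cancel]
  have hstep : (√3 / 2 * T) ^ k * (2 * T) ≤ √3 / 2 * T ^ (k + 1) := by
    calc (√3 / 2 * T) ^ k * (2 * T) = 2 * (√3 / 2) ^ k * T ^ (k + 1) := by ring
      _ ≤ √3 / 2 * T ^ (k + 1) := by gcongr; exact two_mul_sqrt_three_div_two_pow_le (by omega)
  refine le_of_mul_le_mul_right ?_ (cyclotomic_pos hr t)
  calc (√3 / 2 * T) ^ (r.totient * k) * (cyclotomic r ℝ).eval t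
      ≤ (√3 / 2 * T) ^ (r.totient * k) * (2 * T) ^ r.totient := by gcongr
    _ = ((√3 / 2 * T) ^ k * (2 * T)) ^ r.totient := by ring
    _ ≤ (√3 / 2 * T ^ (k + 1)) ^ r.totient := by gcongr
    _ ≤ _ := hlower.trans_eq hfactor.symm

end CyclotomicLowerBound

lemma dvd_fifteen_of_squarefree {n : ℕ} (hsf : Squarefree n) (hodd : Odd n)
    (hsmall : ∀ p ∈ n.primeFactors, p < 7) : n ∣ 15 := by
  have hsub : n.primeFactors ⊆ {3, 5} := fun p hpn => by
    have hp := Nat.prime_of_mem_primeFactors hpn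
    have hp2 : p ≠ 2 := by
      rintro rfl
      exact Nat.not_even_iff_odd.mpr hodd (even_iff_two_dvd.mpr (Nat.dvd_of_mem_primeFactors hpn))
    have := hsmall p hpn
    interval_cases p <;> simp_all +decide
  rw [← Nat.prod_primeFactors_of_squarefree hsf]
  exact (Finset.prod_dvd_prod_of_subset _ _ id hsub).trans (by decide)

theorem cyclotomicLowerBound_of_three_le {n : ℕ} (hn : 3 ≤ n) : CyclotomicLowerBound n := by
  induction n using Nat.strong_induction_on with
  | _ n IH =>
  by_cases hsf : Squarefree n
  · rcases Nat.even_or_odd n with ⟨m, rfl⟩ | hodd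
    · have hm : Odd m := by
        refine Nat.not_even_iff_odd.mp fun ⟨j, hj⟩ => ?_
        have := hsf 2 ⟨j, by omega⟩
        norm_num at this
      rw [← two_mul]
      have hm3 : 2 < m := by obtain ⟨j, rfl⟩ := hm; omega
      exact (IH m (by omega) (by omega)).two_mul hm hm3
    · by_cases hsmall : ∀ p ∈ n.primeFactors, p < 7
      · have h15 := dvd_fifteen_of_squarefree hsf hodd hsmall
        have := Nat.le_of_dvd (by norm_num) h15
        interval_cases n <;> first
          | exact cyclotomicLowerBound_three
          | exact cyclotomicLowerBound_five
          | exact cyclotomicLowerBound_fifteen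
          | norm_num at h15
      · push Not at hsmall
        obtain ⟨p, hpn, hp7⟩ := hsmall
        have hp := Nat.prime_of_mem_primeFactors hpn
        obtain ⟨r, rfl⟩ := Nat.dvd_of_mem_primeFactors hpn
        have hpr : ¬p ∣ r := fun ⟨j, hj⟩ =>
          hp.one_lt.ne' (Nat.isUnit_iff.mp (hsf p ⟨j, by rw [hj]; ring⟩))
        rcases (show r = 1 ∨ 2 < r by
          rcases Nat.odd_mul.mp hodd with ⟨-, ⟨j, rfl⟩⟩; omega) with rfl | hr
        · rw [mul_one]; exact cyclotomicLowerBound_prime hp hp7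
        · rw [mul_comm]
          exact (IH r (by nlinarith) hr).mul_prime hp hp7 hpr hr
  · rw [Nat.squarefree_iff_prime_squarefree] at hsf
    push Not at hsf
    obtain ⟨p, hp, k, rfl⟩ := hsf
    have hk : 0 < k := Nat.pos_of_ne_zero (by rintro rfl; omega)
    have hp2 := hp.two_le
    rw [show p * p * k = p * k * p by ring]
    have hpk : p ≤ p * k := Nat.le_mul_of_pos_right p hk
    rcases (show p * k = 2 ∨ 2 < p * k by omega) with h2 | h3
    · obtain rfl : p = 2 := by nlinarith
      rw [h2]
      exact cyclotomicLowerBound_four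
    · exact (IH (p * k) (by nlinarith) h3).mul_of_dvd hp (dvd_mul_right p k)

lemma cycBinaryForm_zero_right (n : ℕ) (x : ℤ) : cycBinaryForm n x 0 = x ^ n.totient := by
  rw [cycBinaryForm, Finset.sum_range_succ, Finset.sum_eq_zero fun i hi => ?_, zero_add,
    Nat.sub_self, pow_zero, mul_one, ← natDegree_cyclotomic n ℤ,
    (cyclotomic.monic n ℤ).coeff_natDegree, one_mul]
  rw [zero_pow (by rw [Finset.mem_range] at hi; omega), mul_zero]

lemma cycBinaryForm_eq_pow_mul_eval (n : ℕ) (x : ℤ) {y : ℤ} (hy : y ≠ 0) :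
    (cycBinaryForm n x y : ℝ) = (y : ℝ) ^ n.totient * (cyclotomic n ℝ).eval ((x : ℝ) / y) := by
  rw [eval_eq_sum_range, natDegree_cyclotomic, Finset.mul_sum, cycBinaryForm]
  push_cast
  refine Finset.sum_congr rfl fun i hi => ?_
  have hi : i ≤ n.totient := Nat.lt_succ_iff.mp (Finset.mem_range.mp hi)
  rw [← map_cyclotomic_int n ℝ, coeff_map, eq_intCast, div_pow,
    ← Nat.sub_add_cancel hi, pow_add, Nat.add_sub_cancel]
  field_simp

theorem pow_le_cycBinaryForm {n : ℕ} (hn : 3 ≤ n) (x y : ℤ) :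
    (√3 / 2 * max |(x : ℝ)| |(y : ℝ)|) ^ n.totient ≤ cycBinaryForm n x y := by
  have heven : Even n.totient := Nat.totient_even (by omega)
  rcases eq_or_ne y 0 with rfl | hy
  · rw [cycBinaryForm_zero_right, Int.cast_pow, ← heven.pow_abs (x : ℝ), Int.cast_zero, abs_zero,
      max_eq_left (abs_nonneg _)]
    exact pow_le_pow_left₀ (by positivity)
      (mul_le_of_le_one_left (abs_nonneg _) sqrt_three_div_two_le_one) _
  · have hy' : (y : ℝ) ≠ 0 := Int.cast_ne_zero.mpr hy
    have hmax : max |(x : ℝ)| |(y : ℝ)| = |(y : ℝ)| * max 1 |(x : ℝ) / y| := by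
      rw [mul_max_of_nonneg _ _ (abs_nonneg _), mul_one, abs_div,
        mul_div_cancel₀ _ (abs_ne_zero.mpr hy'), max_comm]
    rw [cycBinaryForm_eq_pow_mul_eval n x hy, ← heven.pow_abs (y : ℝ), hmax, mul_left_comm,
      mul_pow]
    gcongr
    exact cyclotomicLowerBound_of_three_le hn _

theorem stmt0_general (m : ℕ) (n : ℕ) (x y : ℤ)
    (hn : 3 ≤ n) (hxy : 2 ≤ max |x| |y|)
    (hrep : cycBinaryForm n x y = (m : ℤ)) :
    (n.totient : ℝ) ≤ (2 / Real.log 3) * Real.log m ∧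
    ((max |x| |y| : ℤ) : ℝ) ≤ (2 / Real.sqrt 3) * (m : ℝ) ^ ((1 : ℝ) / (n.totient : ℝ)) := by
  have hbound := pow_le_cycBinaryForm hn x y
  rw [hrep, Int.cast_natCast] at hbound
  have hM : (2 : ℝ) ≤ max |(x : ℝ)| |(y : ℝ)| := by exact_mod_cast hxy
  have hφ : (0 : ℝ) < n.totient := by exact_mod_cast Nat.totient_pos.mpr (by omega)
  constructor
  · have hsqrt : √3 ^ n.totient ≤ (m : ℝ) :=
      calc √3 ^ n.totient = (√3 / 2 * 2) ^ n.totient := by ring_nf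
        _ ≤ (√3 / 2 * max |(x : ℝ)| |(y : ℝ)|) ^ n.totient := by gcongr
        _ ≤ m := hbound
    have hlog := Real.log_le_log (by positivity) hsqrt
    rw [Real.log_pow, Real.log_sqrt (by norm_num)] at hlog
    rw [div_mul_eq_mul_div, le_div_iff₀ (Real.log_pos (by norm_num))]
    linarith
  · have hroot : √3 / 2 * max |(x : ℝ)| |(y : ℝ)| ≤ (m : ℝ) ^ ((1 : ℝ) / n.totient) := by
      rw [one_div, Real.le_rpow_inv_iff_of_pos (by positivity) (by positivity) hφ,
        Real.rpow_natCast]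
      exact hbound
    push_cast
    calc max |(x : ℝ)| |(y : ℝ)| = 2 / √3 * (√3 / 2 * max |(x : ℝ)| |(y : ℝ)|) := by
          field_simp
      _ ≤ _ := by gcongr

theorem stmt0 (m : ℕ) (hm : 0 < m) (n : ℕ) (x y : ℤ)
    (hn : 3 ≤ n) (hxy : 2 ≤ max |x| |y|)
    (hrep : cycBinaryForm n x y = (m : ℤ)) :
    (n.totient : ℝ) ≤ (2 / Real.log 3) * Real.log m ∧
    ((max |x| |y| : ℤ) : ℝ) ≤ (2 / Real.sqrt 3) * (m : ℝ) ^ ((1 : ℝ) / (n.totient : ℝ)) :=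
  stmt0_general m n x y hn hxy hrep
end

section
/- Let m be a positive integer and let n, x, y be rational integers satisfying n ≥ 3, max{|x|,|y|} ≥ 2 and Φ_n(x,y) = m. Then n < 5.383·(log m)^{1.161}. -/
open Finset Polynomial

namespace Polynomial

lemma eval_homogenize_eq_sum {R : Type*} [CommSemiring R] (p : R[X]) (d : ℕ) (x y : R) :
    MvPolynomial.eval ![x, y] (p.homogenize d) =
      ∑ i ∈ range (d + 1), p.coeff i * x ^ i * y ^ (d - i) := by
  simp only [homogenize, Finset.Nat.sum_antidiagonal_eq_sum_range_succ_mk, MvPolynomial.eval_sum]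
  refine sum_congr rfl fun k _ ↦ ?_
  rw [MvPolynomial.eval_monomial, Finsupp.prod_fintype _ _ (by simp)]
  simp [mul_assoc]

lemma eval_homogenize_prod_X_sub_C {R : Type*} [CommRing R] [Nontrivial R] (s : Finset R)
    (x y : R) :
    MvPolynomial.eval ![x, y] ((∏ r ∈ s, (X - C r)).homogenize s.card) =
      ∏ r ∈ s, (x - r * y) := by
  have h : ∀ r ∈ s, (X - C r).natDegree ≤ 1 := fun r _ ↦ (natDegree_X_sub_C r).le
  rw [card_eq_sum_ones, homogenize_finsetProd h, map_prod]
  simp [mul_comm]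

end Polynomial

lemma cycBinaryForm_eq_prod_primitiveRoots {n : ℕ} (hn : n ≠ 0) (x y : ℤ) :
    (cycBinaryForm n x y : ℂ) = ∏ ζ ∈ primitiveRoots n ℂ, ((x : ℂ) - ζ * y) := by
  have hφ : (primitiveRoots n ℂ).card = n.totient := Complex.card_primitiveRoots n
  rw [← eval_homogenize_prod_X_sub_C, hφ,
    ← cyclotomic_eq_prod_X_sub_primitiveRoots (Complex.isPrimitiveRoot_exp n hn),
    eval_homogenize_eq_sum, cycBinaryForm, ← map_cyclotomic n (Int.castRingHom ℂ)]
  push_cast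
  simp only [coeff_map, eq_intCast]

lemma Complex.normSq_sub_mul_eq {x y e : ℝ} (he2 : e ^ 2 = 1) (he : e * |x * y| = x * y) {ζ : ℂ}
    (hζ : ‖ζ‖ = 1) :
    normSq (x - ζ * y) = (|x| - |y|) ^ 2 + |x * y| * normSq (e - ζ) := by
  have hζ' : ζ.re ^ 2 + ζ.im ^ 2 = 1 := by
    have := normSq_eq_norm_sq ζ
    rw [hζ, normSq_apply] at this
    linear_combination this
  simp only [normSq_apply, sub_re, sub_im, mul_re, mul_im, ofReal_re, ofReal_im]
  rw [abs_mul] at he ⊢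
  linear_combination (y ^ 2 - |x| * |y|) * hζ' - sq_abs x - sq_abs y + 2 * ζ.re * he -
    |x| * |y| * he2

lemma one_le_prod_normSq_sub_primitiveRoots {n : ℕ} (hn : 2 < n) (e : ℤ) :
    1 ≤ ∏ ζ ∈ primitiveRoots n ℂ, Complex.normSq (e - ζ) := by
  have heval : ∏ ζ ∈ primitiveRoots n ℂ, ((e : ℂ) - ζ) = (((cyclotomic n ℤ).eval e : ℤ) : ℂ) := by
    have h := cyclotomic.eval_apply e n (Int.castRingHom ℂ)
    rw [eq_intCast, eq_intCast,
      cyclotomic_eq_prod_X_sub_primitiveRoots (Complex.isPrimitiveRoot_exp n (by omega)),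
      eval_prod] at h
    simpa using h
  have hpos : 0 < (cyclotomic n ℤ).eval e := cyclotomic_pos hn e
  rw [← map_prod, heval, Complex.normSq_intCast]
  exact_mod_cast one_le_mul_of_one_le_of_one_le hpos hpos

lemma exists_three_mul_rpow_le {u v : ℕ} (huv : 2 ≤ max u v) :
    ∃ a : ℝ, 0 ≤ a ∧ ∀ t : ℝ, 0 ≤ t → 3 * t ^ a ≤ ((u : ℝ) - v) ^ 2 + u * v * t := by
  rcases Nat.lt_or_ge (u * v) 3 with hlt | hge
  · rcases Nat.eq_zero_or_pos (u * v) with h0 | hpos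
    · refine ⟨0, le_rfl, fun t _ ↦ ?_⟩
      have h4 : (4 : ℝ) ≤ ((u : ℝ) - v) ^ 2 := by
        rcases Nat.mul_eq_zero.mp h0 with rfl | rfl
        · have : (2 : ℝ) ≤ v := by exact_mod_cast (by simpa using huv : 2 ≤ v)
          push_cast; nlinarith
        · have : (2 : ℝ) ≤ u := by exact_mod_cast (by simpa using huv : 2 ≤ u)
          push_cast; nlinarith
      have : (u : ℝ) * v = 0 := by exact_mod_cast h0
      rw [Real.rpow_zero, this]
      linarith
    · have hD : ((u : ℝ) - v) ^ 2 = 1 ∧ (u : ℝ) * v = 2 := by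
        have hu : u ≤ 2 :=
          (Nat.le_mul_of_pos_right u (Nat.pos_of_mul_pos_left hpos)).trans (by omega)
        have hv : v ≤ 2 :=
          (Nat.le_mul_of_pos_left v (Nat.pos_of_mul_pos_right hpos)).trans (by omega)
        interval_cases u <;> interval_cases v <;> simp_all <;> norm_num
      refine ⟨2 / 3, by norm_num, fun t ht ↦ ?_⟩
      have := Real.geom_mean_le_arith_mean2_weighted (w₁ := 1 / 3) (w₂ := 2 / 3) (p₁ := 1)
        (p₂ := t) (by norm_num) (by norm_num) zero_le_one ht (by norm_num)
      rw [Real.one_rpow, one_mul] at this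
      rw [hD.1, hD.2]
      linarith
  · refine ⟨1, zero_le_one, fun t ht ↦ ?_⟩
    have : (3 : ℝ) ≤ u * v := by exact_mod_cast hge
    rw [Real.rpow_one]
    nlinarith [sq_nonneg ((u : ℝ) - v)]

lemma three_pow_totient_le_sq_cycBinaryForm {n : ℕ} (hn : 2 < n) {x y : ℤ}
    (hxy : 2 ≤ max |x| |y|) : 3 ^ n.totient ≤ cycBinaryForm n x y ^ 2 := by
  obtain ⟨e, he2, he⟩ : ∃ e : ℤ, e ^ 2 = 1 ∧ e * |x * y| = x * y := by
    rcases abs_choice (x * y) with h | h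
    · exact ⟨1, by norm_num, by rw [h, one_mul]⟩
    · exact ⟨-1, by norm_num, by rw [h]; ring⟩
  obtain ⟨a, ha, hbound⟩ := exists_three_mul_rpow_le (u := x.natAbs) (v := y.natAbs)
    (by rw [Int.abs_eq_natAbs, Int.abs_eq_natAbs] at hxy; omega)
  set t : ℂ → ℝ := fun ζ ↦ Complex.normSq (e - ζ)
  have hfactor : ∀ ζ ∈ primitiveRoots n ℂ, Complex.normSq (x - ζ * y) =
      ((x.natAbs : ℝ) - y.natAbs) ^ 2 + x.natAbs * y.natAbs * t ζ := by
    intro ζ hζ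
    have := Complex.normSq_sub_mul_eq (x := x) (y := y) (e := e) (by exact_mod_cast he2)
      (by exact_mod_cast he) (((mem_primitiveRoots (by omega)).mp hζ).norm'_eq_one (by omega))
    push_cast [Nat.cast_natAbs, abs_mul] at this ⊢
    exact this
  have hcard : (primitiveRoots n ℂ).card = n.totient := Complex.card_primitiveRoots n
  suffices (3 : ℝ) ^ n.totient ≤ (cycBinaryForm n x y : ℝ) ^ 2 by exact_mod_cast this
  calc (3 : ℝ) ^ n.totient
      ≤ 3 ^ n.totient * (∏ ζ ∈ primitiveRoots n ℂ, t ζ) ^ a :=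
        le_mul_of_one_le_right (by positivity)
          (Real.one_le_rpow (one_le_prod_normSq_sub_primitiveRoots hn e) ha)
    _ = ∏ ζ ∈ primitiveRoots n ℂ, 3 * t ζ ^ a := by
        rw [prod_mul_distrib, prod_const, hcard,
          Real.finsetProd_rpow _ _ fun ζ _ ↦ Complex.normSq_nonneg _]
    _ ≤ ∏ ζ ∈ primitiveRoots n ℂ, Complex.normSq (x - ζ * y) := by
        refine prod_le_prod (fun ζ _ ↦ mul_nonneg zero_le_three
          (Real.rpow_nonneg (Complex.normSq_nonneg _) a)) fun ζ hζ ↦ ?_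
        rw [hfactor ζ hζ]
        exact hbound _ (Complex.normSq_nonneg _)
    _ = (cycBinaryForm n x y : ℝ) ^ 2 := by
        rw [← map_prod, ← cycBinaryForm_eq_prod_primitiveRoots (by omega),
          Complex.normSq_intCast, sq]

/-- The 1000th power of `p ^ 0.161 * (1 - 1/p) ^ 1.161`, which keeps all exponents integral. -/
noncomputable def primeWeight (p : ℝ) : ℝ := p ^ 161 * (1 - p⁻¹) ^ 1161

lemma primeWeight_eq {p : ℝ} (hp : p ≠ 0) : primeWeight p = (p - 1) ^ 1161 / p ^ 1000 := by
  rw [primeWeight, show 1 - p⁻¹ = (p - 1) / p by field_simp, div_pow]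
  field_simp

lemma primeWeight_nonneg {p : ℝ} (hp : 1 ≤ p) : 0 ≤ primeWeight p := by
  have : 0 ≤ 1 - p⁻¹ := sub_nonneg.mpr (inv_le_one_of_one_le₀ hp)
  unfold primeWeight
  positivity

lemma primeWeight_mono {p q : ℝ} (hp : 1 ≤ p) (hpq : p ≤ q) : primeWeight p ≤ primeWeight q := by
  have : 0 ≤ 1 - p⁻¹ := sub_nonneg.mpr (inv_le_one_of_one_le₀ hp)
  have : 0 ≤ q := by linarith
  unfold primeWeight
  gcongr

lemma one_le_primeWeight {p : ℝ} (hp : 5 ≤ p) : 1 ≤ primeWeight p :=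
  calc (1 : ℝ) ≤ primeWeight 5 := by
        rw [primeWeight_eq (by norm_num), one_le_div (by norm_num)]
        norm_num
        exact_mod_cast (by decide +kernel : 5 ^ 1000 ≤ 4 ^ 1161)
    _ ≤ primeWeight p := primeWeight_mono (by norm_num) hp

lemma primeWeight_two_mul_three_le_prod {S : Finset ℕ} (hS : ∀ p ∈ S, p.Prime) :
    primeWeight 2 * primeWeight 3 ≤ ∏ p ∈ S, primeWeight p := by
  have hprime : ∀ p ∈ S ∪ {2, 3}, p.Prime := by
    simp only [mem_union, mem_insert, mem_singleton]
    rintro p (hp | rfl | rfl)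
    exacts [hS p hp, Nat.prime_two, Nat.prime_three]
  calc primeWeight 2 * primeWeight 3 = ∏ p ∈ {2, 3}, primeWeight (p : ℕ) := by simp
    _ ≤ ∏ p ∈ S ∪ {2, 3}, primeWeight p := by
        refine prod_le_prod_of_subset_of_one_le subset_union_right
          (fun p hp ↦ primeWeight_nonneg (by simp at hp; rcases hp with rfl | rfl <;> norm_num))
          fun p hp hp23 ↦ one_le_primeWeight ?_
        have := (hprime p hp).two_le
        have : p ≠ 4 := by rintro rfl; exact absurd (hprime 4 hp) (by decide)
        simp only [mem_insert, mem_singleton] at hp23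
        exact_mod_cast (by omega : 5 ≤ p)
    _ ≤ ∏ p ∈ S, primeWeight p := by
        refine prod_le_prod_of_subset_of_le_one subset_union_left
          (fun p hp ↦ primeWeight_nonneg (by exact_mod_cast (hprime p hp).one_le))
          fun p hp hpS ↦ ?_
        obtain rfl | rfl : p = 2 ∨ p = 3 := by simpa [hpS] using hp
        all_goals rw [primeWeight_eq (by norm_num), div_le_one (by norm_num)]; norm_num
        · exact one_le_pow₀ one_le_two
        · exact_mod_cast (by decide +kernel : 2 ^ 1161 ≤ 3 ^ 1000)

lemma pow_mul_prod_primeWeight_le_totient_pow (n : ℕ) :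
    (n : ℝ) ^ 1000 * ∏ p ∈ n.primeFactors, primeWeight p ≤ (n.totient : ℝ) ^ 1161 := by
  rcases n.eq_zero_or_pos with rfl | hn
  · simp
  have hφ : (n.totient : ℝ) = n * ∏ p ∈ n.primeFactors, (1 - (p : ℝ)⁻¹) := by
    have := congrArg (Rat.cast : ℚ → ℝ) (Nat.totient_eq_mul_prod_factors n)
    push_cast at this
    exact this
  have hrad : (∏ p ∈ n.primeFactors, (p : ℝ)) ≤ n := by
    rw [← Nat.cast_prod]
    exact_mod_cast Nat.le_of_dvd hn (Nat.prod_primeFactors_dvd n)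
  have hQ : 0 ≤ ∏ p ∈ n.primeFactors, (1 - (p : ℝ)⁻¹) :=
    prod_nonneg fun p hp ↦ sub_nonneg.mpr
      (inv_le_one_of_one_le₀ (by exact_mod_cast (Nat.prime_of_mem_primeFactors hp).one_le))
  simp only [primeWeight, prod_mul_distrib, prod_pow]
  calc (n : ℝ) ^ 1000 * ((∏ p ∈ n.primeFactors, (p : ℝ)) ^ 161 *
        (∏ p ∈ n.primeFactors, (1 - (p : ℝ)⁻¹)) ^ 1161)
      ≤ (n : ℝ) ^ 1000 * ((n : ℝ) ^ 161 * (∏ p ∈ n.primeFactors, (1 - (p : ℝ)⁻¹)) ^ 1161) := by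
        gcongr
    _ = (n.totient : ℝ) ^ 1161 := by rw [hφ]; ring

lemma rpow_pow_eq_pow {x y : ℝ} (hx : 0 ≤ x) {k l : ℕ} (h : y * l = k) : (x ^ y) ^ l = x ^ k := by
  rw [← Real.rpow_mul_natCast hx, h, Real.rpow_natCast]

lemma le_totient_rpow (n : ℕ) : (n : ℝ) ≤ 2.684 * (n.totient : ℝ) ^ (1.161 : ℝ) := by
  have hweight : (1000 / 2684 : ℝ) ^ 1000 ≤ primeWeight 2 * primeWeight 3 := by
    rw [primeWeight_eq two_ne_zero, primeWeight_eq three_ne_zero, div_pow, div_mul_div_comm,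
      div_le_div_iff₀ (by positivity) (by positivity)]
    norm_num
    exact_mod_cast (by decide +kernel :
      1000 ^ 1000 * (2 ^ 1000 * 3 ^ 1000) ≤ 2 ^ 1161 * 2684 ^ 1000)
  have hprod := primeWeight_two_mul_three_le_prod fun p hp ↦
    Nat.prime_of_mem_primeFactors (n := n) hp
  have hpow : (n * (1000 / 2684) : ℝ) ^ 1000 ≤ ((n.totient : ℝ) ^ (1.161 : ℝ)) ^ 1000 := by
    rw [rpow_pow_eq_pow (Nat.cast_nonneg _) (k := 1161) (by norm_num), mul_pow]
    calc (n : ℝ) ^ 1000 * (1000 / 2684) ^ 1000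
        ≤ (n : ℝ) ^ 1000 * ∏ p ∈ n.primeFactors, primeWeight p :=
          mul_le_mul_of_nonneg_left (hweight.trans hprod) (pow_nonneg n.cast_nonneg _)
      _ ≤ _ := pow_mul_prod_primeWeight_le_totient_pow n
  have := le_of_pow_le_pow_left₀ (by norm_num) (by positivity) hpow
  linarith

lemma two_div_log_three_rpow_lt : 2.684 * (2 / Real.log 3) ^ (1.161 : ℝ) < 5.383 := by
  have hlog : 2 / Real.log 3 < 1.8205 := by
    have := Real.log_three_gt_d9
    rw [div_lt_iff₀ (by linarith)]
    linarith
  have hpow : (1.8205 : ℝ) ^ (1.161 : ℝ) < 5.383 / 2.684 := by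
    refine lt_of_pow_lt_pow_left₀ 1000 (by norm_num) ?_
    rw [rpow_pow_eq_pow (by norm_num) (k := 1161) (by norm_num), div_pow,
      lt_div_iff₀ (by positivity)]
    norm_num only [div_pow]
    rw [div_mul_div_comm, div_lt_div_iff₀ (by positivity) (by positivity)]
    exact_mod_cast (by decide +kernel :
      3641 ^ 1161 * 671 ^ 1000 * 1000 ^ 1000 < 5383 ^ 1000 * (2000 ^ 1161 * 250 ^ 1000))
  calc 2.684 * (2 / Real.log 3) ^ (1.161 : ℝ) < 2.684 * (1.8205 : ℝ) ^ (1.161 : ℝ) := by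
        gcongr
    _ < 5.383 := by rw [lt_div_iff₀ (by norm_num)] at hpow; linarith

theorem stmt2_general (m : ℕ) (n : ℕ) (x y : ℤ)
    (hn : 3 ≤ n) (hxy : 2 ≤ max |x| |y|)
    (hrep : cycBinaryForm n x y = (m : ℤ)) :
    (n : ℝ) < 5.383 * Real.log m ^ (1.161 : ℝ) := by
  have hsq : (3 : ℝ) ^ n.totient ≤ (m : ℝ) ^ 2 := by
    exact_mod_cast hrep ▸ three_pow_totient_le_sq_cycBinaryForm hn hxy
  have hlogm : 0 < Real.log m := by
    have : (3 : ℝ) ≤ (m : ℝ) ^ 2 :=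
      (le_self_pow₀ (by norm_num) (Nat.totient_pos.2 (by omega)).ne').trans hsq
    exact Real.log_pos (by nlinarith)
  have htot : (n.totient : ℝ) ≤ 2 / Real.log 3 * Real.log m := by
    have := Real.log_le_log (by positivity) hsq
    rw [Real.log_pow, Real.log_pow] at this
    rw [div_mul_eq_mul_div, le_div_iff₀ (Real.log_pos (by norm_num))]
    push_cast at this
    linarith
  calc (n : ℝ) ≤ 2.684 * (n.totient : ℝ) ^ (1.161 : ℝ) := le_totient_rpow n
    _ ≤ 2.684 * (2 / Real.log 3 * Real.log m) ^ (1.161 : ℝ) := by gcongr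
    _ = 2.684 * (2 / Real.log 3) ^ (1.161 : ℝ) * Real.log m ^ (1.161 : ℝ) := by
        rw [Real.mul_rpow (by positivity) hlogm.le]; ring
    _ < 5.383 * Real.log m ^ (1.161 : ℝ) := by gcongr; exact two_div_log_three_rpow_lt

theorem stmt2 (m : ℕ) (hm : 0 < m) (n : ℕ) (x y : ℤ)
    (hn : 3 ≤ n) (hxy : 2 ≤ max |x| |y|)
    (hrep : cycBinaryForm n x y = (m : ℤ)) :
    (n : ℝ) < 5.383 * Real.log m ^ (1.161 : ℝ) :=
  stmt2_general m n x y hn hxy hrep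
end

section
/- Let f(X) ∈ ℤ[X] be a nonzero polynomial of degree d with positive leading coefficient and with no real root, let g(X) = X^d·f(1/X), and let F(X,Y) = Y^d·f(X/Y). Define γ_1 = inf_{t∈ℝ} f(t), γ_2 = inf_{t∈ℝ} g(t) and γ' = min{inf_{−1≤t≤1} f(t), inf_{−1≤t≤1} g(t)}. Then: (i) for every real c_1 > γ_1 there are infinitely many pairs (x,y) ∈ ℤ² with y > 0 and F(x,y) < c_1·y^d; (ii) for every real c_2 > γ_2 there are infinitely many pairs (x,y) ∈ ℤ² with x > 0 and F(x,y) < c_2·x^d; (iii) for every real c > γ' there are infinitely many pairs (x,y) ∈ ℤ² with F(x,y) < c·max{|x|^d, |y|^d}. -/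
/-!
If `f(t₀) < c` then, by continuity, `f(a/b) < c` for some fraction `a/b` with `b > 0` (and with
`|a| ≤ b` when `t₀ ∈ [-1, 1]`, since rationals are dense in `(-1, 1)`). By homogeneity
`F(ka, kb) = (kb)^d f(a/b) < c (kb)^d` for every `k ≥ 1`, which gives infinitely many pairs.
The statements about `g` are those about `f` for the reflected polynomial `X^d f(1/X)`,
whose binary form is `F` with its arguments swapped.
-/

/-- The binary form `F(X,Y) = Y^d f(X/Y)` associated with an integer polynomial `f`
of degree `d`, evaluated at real numbers. -/
noncomputable def binForm (f : Polynomial ℤ) (d : ℕ) (x y : ℝ) : ℝ :=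
  ∑ i ∈ Finset.range (d + 1), (f.coeff i : ℝ) * x ^ i * y ^ (d - i)

open Polynomial Set

lemma exists_rat_mem_lt_of_mem_closure {g : ℝ → ℝ} (hg : Continuous g) {V : Set ℝ}
    (hV : IsOpen V) {t c : ℝ} (ht : t ∈ closure V) (hgt : g t < c) :
    ∃ q : ℚ, (q : ℝ) ∈ V ∧ g q < c := by
  have hU : IsOpen {s | g s < c} := isOpen_lt hg continuous_const
  obtain ⟨q, hqU, hqV⟩ := Rat.denseRange_cast.exists_mem_open (hU.inter hV)
    (mem_closure_iff.1 ht _ hU hgt)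
  exact ⟨q, hqV, hqU⟩

lemma Set.infinite_of_forall_succ_smul_mem {M : Type*} [AddCommGroup M] [Module.IsTorsionFree ℤ M]
    {S : Set M} {p : M} (hp : p ≠ 0)
    (h : ∀ n : ℕ, ((n + 1 : ℕ) : ℤ) • p ∈ S) : S.Infinite :=
  Set.infinite_of_injective_forall_mem
    ((smul_left_injective ℤ hp).comp (Nat.cast_injective.comp (add_left_injective 1))) h

lemma Set.Infinite.preimage_swap {α β : Type*} {s : Set (α × β)} (hs : s.Infinite) :
    (Prod.swap ⁻¹' s).Infinite :=
  hs.preimage fun p _ => ⟨p.swap, p.swap_swap⟩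

section BinaryForm

variable (f : ℤ[X]) (d : ℕ) {c : ℝ}

lemma binForm_mul_mul (m x y : ℝ) :
    binForm f d (m * x) (m * y) = m ^ d * binForm f d x y := by
  rw [binForm, binForm, Finset.mul_sum]
  refine Finset.sum_congr rfl fun i hi => ?_
  have hid : i + (d - i) = d := Nat.add_sub_cancel' (Nat.lt_succ_iff.1 (Finset.mem_range.1 hi))
  rw [show m ^ d = m ^ i * m ^ (d - i) by rw [← pow_add, hid]]
  ring

lemma binForm_reflect (x y : ℝ) : binForm (f.reflect d) d x y = binForm f d y x := by
  rw [binForm, binForm, ← Finset.sum_range_reflect]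
  refine Finset.sum_congr rfl fun i hi => ?_
  have hid : i ≤ d := Nat.lt_succ_iff.1 (Finset.mem_range.1 hi)
  rw [coeff_reflect, revAt_le (by omega), Nat.add_sub_cancel, Nat.sub_sub_self hid]
  ring

lemma continuous_binForm_fst (y : ℝ) : Continuous fun x => binForm f d x y := by
  unfold binForm
  fun_prop

lemma binForm_mul_num_mul_den (q : ℚ) (n : ℤ) :
    binForm f d ((n * q.num : ℤ) : ℝ) ((n * q.den : ℤ) : ℝ)
      = ((n * q.den : ℤ) : ℝ) ^ d * binForm f d q 1 := by
  have hnum : (q.num : ℝ) = q * q.den := by exact_mod_cast (Rat.mul_den_eq_num q).symm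
  rw [← binForm_mul_mul, mul_one]
  push_cast
  rw [hnum, mul_assoc, mul_comm (q : ℝ)]

lemma infinite_binForm_lt_mul_snd_pow_of_rat (q : ℚ) (hq : binForm f d q 1 < c) :
    {p : ℤ × ℤ | 0 < p.2 ∧ binForm f d p.1 p.2 < c * (p.2 : ℝ) ^ d}.Infinite := by
  refine Set.infinite_of_forall_succ_smul_mem (p := (q.num, q.den)) (by simp) fun n => ?_
  have hpos : 0 < ((n + 1 : ℕ) : ℤ) * q.den := by positivity
  simp only [mem_ofPred_eq, Prod.smul_mk, smul_eq_mul]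
  refine ⟨hpos, ?_⟩
  rw [binForm_mul_num_mul_den, mul_comm c]
  exact mul_lt_mul_of_pos_left hq (pow_pos (Int.cast_pos.2 hpos) d)

lemma infinite_binForm_lt_mul_max_of_rat (q : ℚ) (hq1 : |(q : ℝ)| ≤ 1)
    (hq : binForm f d q 1 < c) :
    {p : ℤ × ℤ | binForm f d p.1 p.2 < c * max (|(p.1 : ℝ)| ^ d) (|(p.2 : ℝ)| ^ d)}.Infinite := by
  have hden : (0 : ℝ) < q.den := by exact_mod_cast q.pos
  have hnum : |(q.num : ℝ)| ≤ q.den := by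
    rw [← Rat.cast_intCast, ← Rat.mul_den_eq_num]
    push_cast
    rw [abs_mul, abs_of_pos hden]
    exact mul_le_of_le_one_left hden.le hq1
  refine Set.infinite_of_forall_succ_smul_mem (p := (q.num, q.den)) (by simp) fun n => ?_
  have hpos : (0 : ℝ) < ((n : ℝ) + 1) * q.den := by positivity
  have hmax : max (|((n : ℝ) + 1) * q.num| ^ d) (|((n : ℝ) + 1) * q.den| ^ d)
      = (((n : ℝ) + 1) * q.den) ^ d := by
    rw [abs_of_pos hpos, max_eq_right]
    gcongr
    rw [abs_mul, abs_of_pos (by positivity : (0 : ℝ) < n + 1)]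
    gcongr
  simp only [mem_ofPred_eq, Prod.smul_mk, smul_eq_mul]
  rw [binForm_mul_num_mul_den, mul_comm c]
  push_cast
  rw [hmax]
  exact mul_lt_mul_of_pos_left hq (pow_pos hpos d)

lemma infinite_binForm_lt_mul_snd_pow (h : sInf (range fun t : ℝ => binForm f d t 1) < c) :
    {p : ℤ × ℤ | 0 < p.2 ∧ binForm f d p.1 p.2 < c * (p.2 : ℝ) ^ d}.Infinite := by
  obtain ⟨_, ⟨t, rfl⟩, htc⟩ := exists_lt_of_csInf_lt (range_nonempty _) h
  obtain ⟨q, -, hq⟩ := exists_rat_mem_lt_of_mem_closure (continuous_binForm_fst f d 1)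
    isOpen_univ (subset_closure (mem_univ t)) htc
  exact infinite_binForm_lt_mul_snd_pow_of_rat f d q hq

lemma infinite_binForm_lt_mul_max
    (h : sInf ((fun t : ℝ => binForm f d t 1) '' Icc (-1) 1) < c) :
    {p : ℤ × ℤ | binForm f d p.1 p.2 < c * max (|(p.1 : ℝ)| ^ d) (|(p.2 : ℝ)| ^ d)}.Infinite := by
  obtain ⟨_, ⟨t, ht, rfl⟩, htc⟩ :=
    exists_lt_of_csInf_lt ((nonempty_Icc.2 (by norm_num)).image _) h
  rw [← closure_Ioo (by norm_num : (-1 : ℝ) ≠ 1)] at ht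
  obtain ⟨q, hq1, hq⟩ := exists_rat_mem_lt_of_mem_closure (continuous_binForm_fst f d 1)
    isOpen_Ioo ht htc
  exact infinite_binForm_lt_mul_max_of_rat f d q (abs_le.2 ⟨hq1.1.le, hq1.2.le⟩) hq

end BinaryForm

theorem stmt11_general (f : Polynomial ℤ) (d : ℕ)
    (γ₁ γ₂ γ' : ℝ)
    (hγ₁ : γ₁ = sInf (Set.range fun t : ℝ => binForm f d t 1))
    (hγ₂ : γ₂ = sInf (Set.range fun t : ℝ => binForm f d 1 t))
    (hγ' : γ' = min (sInf ((fun t : ℝ => binForm f d t 1) '' Set.Icc (-1) 1))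
                    (sInf ((fun t : ℝ => binForm f d 1 t) '' Set.Icc (-1) 1))) :
    (∀ c₁ : ℝ, γ₁ < c₁ →
      {p : ℤ × ℤ | 0 < p.2 ∧ binForm f d (p.1 : ℝ) (p.2 : ℝ) < c₁ * (p.2 : ℝ) ^ d}.Infinite) ∧
    (∀ c₂ : ℝ, γ₂ < c₂ →
      {p : ℤ × ℤ | 0 < p.1 ∧ binForm f d (p.1 : ℝ) (p.2 : ℝ) < c₂ * (p.1 : ℝ) ^ d}.Infinite) ∧
    (∀ c : ℝ, γ' < c →
      {p : ℤ × ℤ |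
        binForm f d (p.1 : ℝ) (p.2 : ℝ) <
          c * max (|(p.1 : ℝ)| ^ d) (|(p.2 : ℝ)| ^ d)}.Infinite) := by
  have hrev : (fun t : ℝ => binForm f d 1 t) = fun t => binForm (f.reflect d) d t 1 :=
    funext fun t => (binForm_reflect f d t 1).symm
  rw [hrev] at hγ₂ hγ'
  refine ⟨fun c₁ hc₁ => infinite_binForm_lt_mul_snd_pow f d (hγ₁ ▸ hc₁),
    fun c₂ hc₂ => ?_, fun c hc => ?_⟩
  · simpa [binForm_reflect] using
      (infinite_binForm_lt_mul_snd_pow (f.reflect d) d (hγ₂ ▸ hc₂)).preimage_swap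
  · rcases min_lt_iff.1 (hγ' ▸ hc) with h | h
    · exact infinite_binForm_lt_mul_max f d h
    · simpa [binForm_reflect, max_comm] using
        (infinite_binForm_lt_mul_max (f.reflect d) d h).preimage_swap

theorem stmt11 (f : Polynomial ℤ) (d : ℕ) (hf0 : f ≠ 0) (hdeg : f.natDegree = d)
    (hlead : 0 < f.leadingCoeff)
    (hnoroot : ∀ t : ℝ, Polynomial.eval t (f.map (Int.castRingHom ℝ)) ≠ 0)
    (γ₁ γ₂ γ' : ℝ)
    (hγ₁ : γ₁ = sInf (Set.range fun t : ℝ => binForm f d t 1))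
    (hγ₂ : γ₂ = sInf (Set.range fun t : ℝ => binForm f d 1 t))
    (hγ' : γ' = min (sInf ((fun t : ℝ => binForm f d t 1) '' Set.Icc (-1) 1))
                    (sInf ((fun t : ℝ => binForm f d 1 t) '' Set.Icc (-1) 1))) :
    (∀ c₁ : ℝ, γ₁ < c₁ →
      {p : ℤ × ℤ | 0 < p.2 ∧ binForm f d (p.1 : ℝ) (p.2 : ℝ) < c₁ * (p.2 : ℝ) ^ d}.Infinite) ∧
    (∀ c₂ : ℝ, γ₂ < c₂ →
      {p : ℤ × ℤ | 0 < p.1 ∧ binForm f d (p.1 : ℝ) (p.2 : ℝ) < c₂ * (p.1 : ℝ) ^ d}.Infinite) ∧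
    (∀ c : ℝ, γ' < c →
      {p : ℤ × ℤ |
        binForm f d (p.1 : ℝ) (p.2 : ℝ) <
          c * max (|(p.1 : ℝ)| ^ d) (|(p.2 : ℝ)| ^ d)}.Infinite) :=
  stmt11_general f d γ₁ γ₂ γ' hγ₁ hγ₂ hγ'
end

section
/- For any odd squarefree integer n = p_1⋯p_r with p_1 < p_2 < ⋯ < p_r odd primes, satisfying n ≥ 11 and n ≠ 15, one has φ(n) > 2^{r+1}·log p_1. -/
/-!
Since `n` is odd, every factor of `∏ p ∣ n, (p - 1) ≤ φ n` is at least `2`, so for any prime factor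
`q` we get `φ n ≥ 2 ^ (r - 1) * (q - 1)`. If some `q ≥ 11`, then `q - 1 > 4 log q ≥ 4 log p₁`.
Otherwise every prime factor lies in `{3, 5, 7}`, so the squarefree `n` divides `105`, leaving only
`n = 21, 35, 105`, which are checked directly.
-/

open Finset

theorem Finset.pow_card_sub_one_mul_le_prod {ι N : Type*} [DecidableEq ι] [CommMonoid N]
    [Preorder N] [MulLeftMono N] {s : Finset ι} {f : ι → N} {a : N} (h : ∀ i ∈ s, a ≤ f i)
    {j : ι} (hj : j ∈ s) : a ^ (#s - 1) * f j ≤ ∏ i ∈ s, f i := by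
  rw [← prod_erase_mul s f hj, ← card_erase_of_mem hj]
  exact mul_le_mul_left (pow_card_le_prod _ _ _ fun i hi => h i (mem_of_mem_erase hi)) _

namespace Real

theorem four_mul_log_lt_sub_one {x : ℝ} (hx : 11 ≤ x) : 4 * log x < x - 1 := by
  have hlog11 : log 11 < 5 / 2 :=
    calc log 11 < log (2 ^ 2 * 3) := log_lt_log (by norm_num) (by norm_num)
      _ = 2 * log 2 + log 3 := by
        rw [log_mul (by norm_num) (by norm_num), log_pow]; push_cast; ring
      _ < 5 / 2 := by linarith [log_two_lt_d9, log_three_lt_d9]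
  have hsplit : log x = log 11 + log (x / 11) := by
    rw [← log_mul (by norm_num) (by positivity), mul_div_cancel₀ _ (by norm_num)]
  have hrest : log (x / 11) ≤ x / 11 - 1 := log_le_sub_one_of_pos (by positivity)
  linarith

end Real

namespace Nat

theorem prod_primeFactors_sub_one_le_totient {n : ℕ} (hn : n ≠ 0) :
    ∏ p ∈ n.primeFactors, (p - 1) ≤ φ n :=
  le_of_dvd (totient_pos.2 (pos_of_ne_zero hn))
    (Dvd.intro_left _ (totient_eq_div_primeFactors_mul n).symm)

theorem three_le_of_mem_primeFactors_of_odd {n p : ℕ} (hodd : Odd n)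
    (hp : p ∈ n.primeFactors) : 3 ≤ p := by
  have h2 := (prime_of_mem_primeFactors hp).two_le
  have hp_odd := Nat.odd_iff.1 (hodd.of_dvd_nat (dvd_of_mem_primeFactors hp))
  omega

theorem two_pow_card_primeFactors_sub_one_mul_le_totient {n q : ℕ} (hodd : Odd n)
    (hq : q ∈ n.primeFactors) : 2 ^ (#n.primeFactors - 1) * (q - 1) ≤ φ n :=
  (pow_card_sub_one_mul_le_prod (f := fun p => p - 1)
      (fun p hp => by have := three_le_of_mem_primeFactors_of_odd hodd hp; omega) hq).trans
    (prod_primeFactors_sub_one_le_totient (mem_primeFactors.1 hq).2.2)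

theorem two_pow_mul_log_minFac_lt_totient_of_eleven_le {n q : ℕ} (hodd : Odd n)
    (hq : q ∈ n.primeFactors) (hq11 : 11 ≤ q) :
    (2 : ℝ) ^ (#n.primeFactors + 1) * Real.log n.minFac < φ n := by
  have hr : 1 ≤ #n.primeFactors := Finset.card_pos.2 ⟨q, hq⟩
  have hminFac : n.minFac ≤ q :=
    minFac_le_of_dvd (prime_of_mem_primeFactors hq).two_le (dvd_of_mem_primeFactors hq)
  have hφ : (2 : ℝ) ^ (#n.primeFactors - 1) * (q - 1) ≤ φ n := by
    have := two_pow_card_primeFactors_sub_one_mul_le_totient hodd hq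
    rw [← Nat.cast_le (α := ℝ)] at this
    push_cast [show 1 ≤ q by omega] at this
    exact this
  calc (2 : ℝ) ^ (#n.primeFactors + 1) * Real.log n.minFac
      ≤ 2 ^ (#n.primeFactors + 1) * Real.log q := by
        gcongr
        exact_mod_cast minFac_pos n
    _ = 2 ^ (#n.primeFactors - 1) * (4 * Real.log q) := by
        rw [show #n.primeFactors + 1 = #n.primeFactors - 1 + 2 by omega, pow_add]; ring
    _ < 2 ^ (#n.primeFactors - 1) * (q - 1) := by
        gcongr; exact Real.four_mul_log_lt_sub_one (by exact_mod_cast hq11)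
    _ ≤ φ n := hφ

theorem dvd_105_of_forall_mem_primeFactors_lt_eleven {n : ℕ} (hodd : Odd n)
    (hsf : Squarefree n) (h : ∀ p ∈ n.primeFactors, p < 11) : n ∣ 105 := by
  have hsub : n.primeFactors ⊆ {3, 5, 7} := fun p hp => by
    have hprime := prime_of_mem_primeFactors hp
    have h3 := three_le_of_mem_primeFactors_of_odd hodd hp
    have h11 := h p hp
    interval_cases p <;> first | decide | norm_num at hprime
  rw [← prod_primeFactors_of_squarefree hsf]
  exact (prod_dvd_prod_of_subset _ _ id hsub).trans (by decide)

end Nat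

theorem stmt14 (n : ℕ) (hodd : Odd n) (hsf : Squarefree n)
    (h11 : 11 ≤ n) (h15 : n ≠ 15) :
    (2 : ℝ) ^ (n.primeFactors.card + 1) * Real.log n.minFac < (n.totient : ℝ) := by
  by_cases hlarge : ∃ q ∈ n.primeFactors, 11 ≤ q
  · obtain ⟨q, hq, hq11⟩ := hlarge
    exact Nat.two_pow_mul_log_minFac_lt_totient_of_eleven_le hodd hq hq11
  push Not at hlarge
  have hn : n ∈ Nat.divisors 105 := Nat.mem_divisors.2
    ⟨Nat.dvd_105_of_forall_mem_primeFactors_lt_eleven hodd hsf hlarge, by norm_num⟩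
  rw [show Nat.divisors 105 = {1, 3, 5, 7, 15, 21, 35, 105} by decide] at hn
  simp only [mem_insert, mem_singleton] at hn
  obtain rfl | rfl | rfl : n = 21 ∨ n = 35 ∨ n = 105 := by omega
  all_goals
    refine lt_of_lt_of_le ?_ (Nat.cast_le.2 (Nat.prod_primeFactors_sub_one_le_totient (by norm_num)))
    simp [Nat.primeFactors, Nat.primeFactorsList_ofNat]
    norm_num
    linarith [Real.log_three_lt_d9, Real.log_five_lt_d9]
end

section
/- An integer n ≥ 1 is simultaneously of the form n = u² + uv + v² with (u,v) ∈ ℤ² and of the form n = x² + y² with (x,y) ∈ ℤ² if and only if there exist integers a, b ≥ 0 and positive integers N_{5,12}, N_{7,12}, N_{11,12}, N_{1,12} — where for each pair (c,12) among (5,12), (7,12), (11,12), (1,12) every prime divisor of N_{c,12} is congruent to c modulo 12 — such that n = (2^a · 3^b · N_{5,12} · N_{7,12} · N_{11,12})² · N_{1,12}. -/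
/-!
Both forms are multiplicative. By Fermat–Euler, `n` is a sum of two squares iff every prime
`q ≡ 3 (mod 4)` divides `n` to an even power; the analogue for `u² + uv + v²` holds with primes
`q ≡ 2 (mod 3)`. Such a `q` dividing `u² + uv + v²` divides `u` and `v`, since `t² + t + 1` has no
root mod `q` (it would have order 3 in `(ℤ/q)ˣ`), while a prime `p ≡ 1 (mod 3)` is represented by
applying Thue's lemma to a root of `t² + t + 1` mod `p`. Hence `n` has both forms iff every prime
`q ≢ 1 (mod 12)` divides `n` to an even power, which is exactly the stated shape.
-/

namespace ZMod

theorem sq_add_self_add_one_ne_zero {q : ℕ} [Fact q.Prime] (hq : q % 3 = 2) (t : ZMod q) :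
    t ^ 2 + t + 1 ≠ 0 := by
  intro ht
  have ht3 : t ^ 3 = 1 := by linear_combination (t - 1) * ht
  have ht1 : t ≠ 1 := by
    rintro rfl
    have h3 : ((3 : ℕ) : ZMod q) = 0 := by push_cast; linear_combination ht
    have := (Nat.prime_dvd_prime_iff_eq (Fact.out : q.Prime) Nat.prime_three).mp
      ((ZMod.natCast_eq_zero_iff 3 q).mp h3)
    omega
  have h0 : t ≠ 0 := by rintro rfl; norm_num at ht3
  have hord : orderOf t ∣ q - 1 := orderOf_dvd_of_pow_eq_one (pow_card_sub_one_eq_one h0)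
  rw [orderOf_eq_prime ht3 ht1] at hord
  have := (Fact.out : q.Prime).two_le
  omega

theorem exists_sq_add_self_add_one_eq_zero {p : ℕ} [Fact p.Prime] (hp : p % 3 = 1) :
    ∃ t : ZMod p, t ^ 2 + t + 1 = 0 := by
  have : Fact (Nat.Prime 3) := ⟨Nat.prime_three⟩
  obtain ⟨g, hg⟩ := exists_prime_orderOf_dvd_card 3 (G := (ZMod p)ˣ) (by rw [card_units]; omega)
  have hg3 : (g : ZMod p) ^ 3 = 1 := by
    rw [← Units.val_pow_eq_pow_val, ← hg, pow_orderOf_eq_one]; rfl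
  have hg1 : (g : ZMod p) - 1 ≠ 0 := by
    rw [sub_ne_zero, Ne, Units.val_eq_one, ← orderOf_eq_one_iff, hg]; norm_num
  have : ((g : ZMod p) - 1) * ((g : ZMod p) ^ 2 + g + 1) = 0 := by linear_combination hg3
  exact ⟨g, (mul_eq_zero.mp this).resolve_left hg1⟩

/-- Thue's lemma: pigeonhole on the `(⌊√n⌋ + 1)²` values `a - ζ b` with `0 ≤ a, b ≤ ⌊√n⌋`. -/
theorem exists_intCast_eq_mul_of_sq_le (n : ℕ) [NeZero n] (ζ : ZMod n) :
    ∃ u v : ℤ, (u ≠ 0 ∨ v ≠ 0) ∧ u ^ 2 ≤ n ∧ v ^ 2 ≤ n ∧ (u : ZMod n) = ζ * v := by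
  set m := n.sqrt
  have hcard : Fintype.card (ZMod n) < Fintype.card (Fin (m + 1) × Fin (m + 1)) := by
    simpa [ZMod.card, sq] using Nat.lt_succ_sqrt' n
  obtain ⟨⟨a₁, b₁⟩, ⟨a₂, b₂⟩, hne, heq⟩ := Fintype.exists_ne_map_eq_of_card_lt
    (fun x : Fin (m + 1) × Fin (m + 1) => ((x.1 : ℕ) : ZMod n) - ζ * (x.2 : ℕ)) hcard
  have hm : (m : ℤ) ^ 2 ≤ n := by exact_mod_cast Nat.sqrt_le' n
  have bound : ∀ i j : Fin (m + 1), ((i : ℤ) - j) ^ 2 ≤ n := fun i j => by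
    have hi : (i : ℤ) ≤ m := by exact_mod_cast Nat.lt_succ_iff.mp i.isLt
    have hj : (j : ℤ) ≤ m := by exact_mod_cast Nat.lt_succ_iff.mp j.isLt
    nlinarith [Int.natCast_nonneg i, Int.natCast_nonneg j]
  refine ⟨(a₁ : ℤ) - a₂, (b₁ : ℤ) - b₂, ?_, bound a₁ a₂, bound b₁ b₂, ?_⟩
  · by_contra! h
    rw [Ne, Prod.mk.injEq, Fin.ext_iff, Fin.ext_iff] at hne
    omega
  · push_cast
    linear_combination heq

end ZMod

/-- The Löschian numbers: the values of `u² + uv + v²` on `ℤ²`, closed under products by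
`(u² + uv + v²)(x² + xy + y²) = (ux - vy)² + (ux - vy)(uy + vx + vy) + (uy + vx + vy)²`. -/
def loeschian : Submonoid ℕ where
  carrier := {n | ∃ u v : ℤ, (n : ℤ) = u ^ 2 + u * v + v ^ 2}
  one_mem' := ⟨1, 0, by norm_num⟩
  mul_mem' := by
    rintro _ _ ⟨u, v, hm⟩ ⟨x, y, hn⟩
    exact ⟨u * x - v * y, u * y + v * x + v * y, by push_cast [hm, hn]; ring⟩

theorem mem_loeschian {n : ℕ} : n ∈ loeschian ↔ ∃ u v : ℤ, (n : ℤ) = u ^ 2 + u * v + v ^ 2 :=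
  Iff.rfl

theorem sq_mem_loeschian (k : ℕ) : k ^ 2 ∈ loeschian := ⟨k, 0, by push_cast; ring⟩

theorem dvd_and_dvd_of_dvd_sq_add_mul_add_sq {q : ℕ} (hq : q.Prime) (h3 : q % 3 = 2) {u v : ℤ}
    (h : (q : ℤ) ∣ u ^ 2 + u * v + v ^ 2) : (q : ℤ) ∣ u ∧ (q : ℤ) ∣ v := by
  have : Fact q.Prime := ⟨hq⟩
  simp only [← ZMod.intCast_zmod_eq_zero_iff_dvd] at h ⊢
  push_cast at h
  have hv : (v : ZMod q) = 0 := by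
    by_contra hv
    apply ZMod.sq_add_self_add_one_ne_zero h3 (u * (v : ZMod q)⁻¹)
    have : (v : ZMod q) ^ 2 ≠ 0 := pow_ne_zero 2 hv
    field_simp
    linear_combination h
  rw [hv] at h
  exact ⟨pow_eq_zero_iff two_ne_zero |>.mp (by linear_combination h), hv⟩

theorem even_padicValNat_of_mem_loeschian {q : ℕ} (hq : q.Prime) (h3 : q % 3 = 2) :
    ∀ {n : ℕ}, n ∈ loeschian → Even (padicValNat q n) := by
  have : Fact q.Prime := ⟨hq⟩
  intro n
  induction n using Nat.strong_induction_on with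
  | _ n ih =>
    rintro ⟨u, v, huv⟩
    by_cases hqn : q ∣ n
    swap
    · simp [padicValNat.eq_zero_of_not_dvd hqn]
    rcases eq_or_ne n 0 with rfl | hn0
    · simp
    obtain ⟨⟨u', rfl⟩, ⟨v', rfl⟩⟩ :=
      dvd_and_dvd_of_dvd_sq_add_mul_add_sq hq h3 (huv ▸ Int.natCast_dvd_natCast.mpr hqn)
    obtain ⟨m, rfl⟩ : q ^ 2 ∣ n := by
      refine Int.natCast_dvd_natCast.mp ⟨u' ^ 2 + u' * v' + v' ^ 2, ?_⟩
      push_cast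
      linear_combination huv
    have hm0 : m ≠ 0 := by rintro rfl; simp at hn0
    have hm : m ∈ loeschian := ⟨u', v', by
      refine mul_left_cancel₀ (pow_ne_zero 2 (Int.natCast_ne_zero.mpr hq.ne_zero)) ?_
      push_cast at huv
      linear_combination huv⟩
    have hlt : m < q ^ 2 * m := lt_mul_left (Nat.pos_of_ne_zero hm0) (by nlinarith [hq.two_le])
    rw [padicValNat.mul (pow_ne_zero 2 hq.ne_zero) hm0, padicValNat.prime_pow]
    exact even_two.add (ih m hlt hm)

theorem Nat.Prime.mem_loeschian {p : ℕ} (hp : p.Prime) (h1 : p % 3 = 1) : p ∈ loeschian := by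
  have : Fact p.Prime := ⟨hp⟩
  obtain ⟨t, ht⟩ := ZMod.exists_sq_add_self_add_one_eq_zero h1
  obtain ⟨u, v, huv0, hu, hv, hcong⟩ := ZMod.exists_intCast_eq_mul_of_sq_le p t
  have hsq_lt : ∀ w : ℤ, w ^ 2 ≤ p → w ^ 2 < p := fun w hw => by
    refine lt_of_le_of_ne hw fun h => ?_
    have : w.natAbs ^ 2 = p := by zify; rwa [sq_abs]
    exact absurd (hp.pow_eq_iff.mp this).2 (by norm_num)
  have hdvd : (p : ℤ) ∣ u ^ 2 + u * v + v ^ 2 := by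
    rw [← ZMod.intCast_zmod_eq_zero_iff_dvd]
    push_cast
    rw [hcong]
    linear_combination (v : ZMod p) ^ 2 * ht
  obtain ⟨c, hc⟩ := hdvd
  have hpos : 0 < u ^ 2 + u * v + v ^ 2 := by
    rcases huv0 with h | h <;>
      nlinarith [sq_nonneg (2 * u + v), sq_nonneg (u + 2 * v), sq_pos_of_ne_zero h]
  have hlt : u ^ 2 + u * v + v ^ 2 < 3 * p := by
    nlinarith [hsq_lt u hu, hsq_lt v hv, sq_nonneg (u - v)]
  have hp0 : (0 : ℤ) < p := by exact_mod_cast hp.pos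
  obtain rfl | rfl : c = 1 ∨ c = 2 := by
    have : 0 < c := by nlinarith
    have : c < 3 := by nlinarith
    omega
  · exact ⟨u, v, by linarith⟩
  · -- `u² + uv + v² = 2p` is impossible: 2 would divide `u` and `v`, so 4 would divide `2p`.
    obtain ⟨⟨u', rfl⟩, ⟨v', rfl⟩⟩ :=
      dvd_and_dvd_of_dvd_sq_add_mul_add_sq (u := u) (v := v) Nat.prime_two (by norm_num)
        ⟨p, by push_cast; linarith⟩
    have : (2 : ℤ) ∣ p := ⟨u' ^ 2 + u' * v' + v' ^ 2, by push_cast at hc; linarith⟩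
    have := (Nat.prime_dvd_prime_iff_eq Nat.prime_two hp).mp (by exact_mod_cast this)
    omega

theorem Submonoid.mem_of_even_padicValNat {M : Submonoid ℕ} {P : ℕ → Prop}
    (hP : ∀ p, p.Prime → P p → p ∈ M) (hsq : ∀ p, p.Prime → ¬P p → p ^ 2 ∈ M) {n : ℕ}
    (hn : n ≠ 0) (heven : ∀ p, p.Prime → ¬P p → Even (padicValNat p n)) : n ∈ M := by
  rw [← Nat.prod_factorization_pow_eq_self hn]
  refine M.prod_mem fun p hp => ?_
  have hp : p.Prime := Nat.prime_of_mem_primeFactors (by rwa [← Nat.support_factorization])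
  by_cases hPp : P p
  · exact M.pow_mem (hP p hp hPp) _
  · obtain ⟨k, hk⟩ := heven p hp hPp
    dsimp only
    rw [Nat.factorization_def n hp, hk, ← two_mul, pow_mul]
    exact M.pow_mem (hsq p hp hPp) k

theorem mem_loeschian_iff {n : ℕ} :
    n ∈ loeschian ↔ ∀ q, q.Prime → q % 3 = 2 → Even (padicValNat q n) := by
  refine ⟨fun h q hq h3 => even_padicValNat_of_mem_loeschian hq h3 h, fun h => ?_⟩
  rcases eq_or_ne n 0 with rfl | hn
  · exact sq_mem_loeschian 0
  refine Submonoid.mem_of_even_padicValNat (P := fun p => p % 3 ≠ 2) (fun p hp hp3 => ?_)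
    (fun p _ _ => sq_mem_loeschian p) hn (fun p hp hp3 => h p hp (not_not.mp hp3))
  obtain h0 | h1 : p % 3 = 0 ∨ p % 3 = 1 := by omega
  · obtain rfl := (Nat.prime_dvd_prime_iff_eq Nat.prime_three hp).mp (Nat.dvd_of_mod_eq_zero h0)
    exact ⟨1, 1, by norm_num⟩
  · exact hp.mem_loeschian h1

theorem exists_int_sq_add_sq_iff {n : ℕ} :
    (∃ x y : ℤ, (n : ℤ) = x ^ 2 + y ^ 2) ↔ ∀ q, q.Prime → q % 4 = 3 → Even (padicValNat q n) := by
  calc (∃ x y : ℤ, (n : ℤ) = x ^ 2 + y ^ 2) ↔ ∃ x y : ℕ, n = x ^ 2 + y ^ 2 :=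
        ⟨fun ⟨x, y, h⟩ => ⟨x.natAbs, y.natAbs, by zify; simpa only [sq_abs]⟩,
          fun ⟨x, y, h⟩ => ⟨x, y, by exact_mod_cast h⟩⟩
    _ ↔ _ := by
      refine Nat.eq_sq_add_sq_iff.trans
        ⟨fun h q hq h4 => ?_, fun h q hq => h q (Nat.prime_of_mem_primeFactors hq)⟩
      by_cases hqn : q ∈ n.primeFactors
      · exact h q hqn h4
      · rw [← Nat.support_factorization, Finsupp.notMem_support_iff,
          Nat.factorization_def n hq] at hqn
        exact hqn ▸ Even.zero

theorem Nat.Prime.mod_twelve {p : ℕ} (hp : p.Prime) :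
    p = 2 ∨ p = 3 ∨ p % 12 = 1 ∨ p % 12 = 5 ∨ p % 12 = 7 ∨ p % 12 = 11 := by
  have h2 := hp.eq_one_or_self_of_dvd 2
  have h3 := hp.eq_one_or_self_of_dvd 3
  omega

theorem Nat.Prime.mod_three_eq_two_or_mod_four_eq_three {p : ℕ} (hp : p.Prime) (h : p % 12 ≠ 1) :
    p % 3 = 2 ∨ p % 4 = 3 := by
  have := hp.mod_twelve
  omega

theorem mod_eq_of_prime_dvd_mul {m c a b : ℕ} (ha : ∀ p : ℕ, p.Prime → p ∣ a → p % m = c)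
    (hb : ∀ p : ℕ, p.Prime → p ∣ b → p % m = c) : ∀ p : ℕ, p.Prime → p ∣ a * b → p % m = c :=
  fun p hp hab => (hp.dvd_mul.mp hab).elim (ha p hp) (hb p hp)

theorem mod_eq_of_prime_dvd_prime {m c q : ℕ} (hq : q.Prime) (hqc : q % m = c) :
    ∀ p : ℕ, p.Prime → p ∣ q → p % m = c :=
  fun _ hp hpq => (Nat.prime_dvd_prime_iff_eq hp hq).mp hpq ▸ hqc

theorem mod_eq_of_prime_dvd_one {m c : ℕ} : ∀ p : ℕ, p.Prime → p ∣ 1 → p % m = c :=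
  fun _ hp h => absurd h hp.not_dvd_one

def modTwelveForm : Submonoid ℕ where
  carrier := {n | ∃ a b N5 N7 N11 N1 : ℕ, 0 < N5 ∧ 0 < N7 ∧ 0 < N11 ∧ 0 < N1 ∧
      (∀ p : ℕ, p.Prime → p ∣ N5 → p % 12 = 5) ∧
      (∀ p : ℕ, p.Prime → p ∣ N7 → p % 12 = 7) ∧
      (∀ p : ℕ, p.Prime → p ∣ N11 → p % 12 = 11) ∧
      (∀ p : ℕ, p.Prime → p ∣ N1 → p % 12 = 1) ∧
      n = (2 ^ a * 3 ^ b * N5 * N7 * N11) ^ 2 * N1}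
  one_mem' := ⟨0, 0, 1, 1, 1, 1, one_pos, one_pos, one_pos, one_pos, mod_eq_of_prime_dvd_one,
    mod_eq_of_prime_dvd_one, mod_eq_of_prime_dvd_one, mod_eq_of_prime_dvd_one, by norm_num⟩
  mul_mem' := by
    rintro _ _ ⟨a, b, N5, N7, N11, N1, h5, h7, h11, h1, c5, c7, c11, c1, rfl⟩
      ⟨a', b', N5', N7', N11', N1', h5', h7', h11', h1', c5', c7', c11', c1', rfl⟩
    exact ⟨a + a', b + b', N5 * N5', N7 * N7', N11 * N11', N1 * N1', by positivity,
      by positivity, by positivity, by positivity, mod_eq_of_prime_dvd_mul c5 c5',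
      mod_eq_of_prime_dvd_mul c7 c7', mod_eq_of_prime_dvd_mul c11 c11',
      mod_eq_of_prime_dvd_mul c1 c1', by ring⟩

theorem mem_modTwelveForm {n : ℕ} : n ∈ modTwelveForm ↔
    ∃ a b N5 N7 N11 N1 : ℕ, 0 < N5 ∧ 0 < N7 ∧ 0 < N11 ∧ 0 < N1 ∧
      (∀ p : ℕ, p.Prime → p ∣ N5 → p % 12 = 5) ∧
      (∀ p : ℕ, p.Prime → p ∣ N7 → p % 12 = 7) ∧
      (∀ p : ℕ, p.Prime → p ∣ N11 → p % 12 = 11) ∧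
      (∀ p : ℕ, p.Prime → p ∣ N1 → p % 12 = 1) ∧
      n = (2 ^ a * 3 ^ b * N5 * N7 * N11) ^ 2 * N1 :=
  Iff.rfl

theorem Nat.Prime.mem_modTwelveForm {p : ℕ} (hp : p.Prime) (h1 : p % 12 = 1) :
    p ∈ modTwelveForm :=
  ⟨0, 0, 1, 1, 1, p, one_pos, one_pos, one_pos, hp.pos, mod_eq_of_prime_dvd_one,
    mod_eq_of_prime_dvd_one, mod_eq_of_prime_dvd_one, mod_eq_of_prime_dvd_prime hp h1, by ring⟩

theorem Nat.Prime.sq_mem_modTwelveForm {p : ℕ} (hp : p.Prime) : p ^ 2 ∈ modTwelveForm := by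
  have vacuous := @mod_eq_of_prime_dvd_one 12
  rcases hp.mod_twelve with rfl | rfl | h | h | h | h
  · exact ⟨1, 0, 1, 1, 1, 1, one_pos, one_pos, one_pos, one_pos, vacuous, vacuous, vacuous,
      vacuous, by norm_num⟩
  · exact ⟨0, 1, 1, 1, 1, 1, one_pos, one_pos, one_pos, one_pos, vacuous, vacuous, vacuous,
      vacuous, by norm_num⟩
  · exact sq p ▸ modTwelveForm.mul_mem (hp.mem_modTwelveForm h) (hp.mem_modTwelveForm h)
  · exact ⟨0, 0, p, 1, 1, 1, hp.pos, one_pos, one_pos, one_pos, mod_eq_of_prime_dvd_prime hp h,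
      vacuous, vacuous, vacuous, by ring⟩
  · exact ⟨0, 0, 1, p, 1, 1, one_pos, hp.pos, one_pos, one_pos, vacuous,
      mod_eq_of_prime_dvd_prime hp h, vacuous, vacuous, by ring⟩
  · exact ⟨0, 0, 1, 1, p, 1, one_pos, one_pos, hp.pos, one_pos, vacuous, vacuous,
      mod_eq_of_prime_dvd_prime hp h, vacuous, by ring⟩

theorem mem_modTwelveForm_iff {n : ℕ} (hn : n ≠ 0) :
    n ∈ modTwelveForm ↔ ∀ q, q.Prime → q % 12 ≠ 1 → Even (padicValNat q n) := by
  refine ⟨?_, Submonoid.mem_of_even_padicValNat (fun p hp h1 => hp.mem_modTwelveForm h1)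
    (fun p hp _ => hp.sq_mem_modTwelveForm) hn⟩
  rintro ⟨a, b, N5, N7, N11, N1, h5, h7, h11, h1, -, -, -, c1, rfl⟩ q hq h12
  have : Fact q.Prime := ⟨hq⟩
  rw [padicValNat.mul (by positivity) h1.ne', padicValNat.pow _ _,
    padicValNat.eq_zero_of_not_dvd fun hd => h12 (c1 q hq hd), add_zero]
  exact even_two_mul _

theorem stmt18 (n : ℕ) (hn : 1 ≤ n) :
    ((∃ u v : ℤ, (n : ℤ) = u ^ 2 + u * v + v ^ 2) ∧
      (∃ x y : ℤ, (n : ℤ) = x ^ 2 + y ^ 2)) ↔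
    ∃ a b N5 N7 N11 N1 : ℕ, 0 < N5 ∧ 0 < N7 ∧ 0 < N11 ∧ 0 < N1 ∧
      (∀ p : ℕ, p.Prime → p ∣ N5 → p % 12 = 5) ∧
      (∀ p : ℕ, p.Prime → p ∣ N7 → p % 12 = 7) ∧
      (∀ p : ℕ, p.Prime → p ∣ N11 → p % 12 = 11) ∧
      (∀ p : ℕ, p.Prime → p ∣ N1 → p % 12 = 1) ∧
      n = (2 ^ a * 3 ^ b * N5 * N7 * N11) ^ 2 * N1 := by
  rw [← mem_loeschian, mem_loeschian_iff, exists_int_sq_add_sq_iff,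
    ← mem_modTwelveForm, mem_modTwelveForm_iff (by omega)]
  refine ⟨fun ⟨h3, h4⟩ q hq h12 => ?_, fun h => ⟨fun q hq h3 => h q hq (by omega),
    fun q hq h4 => h q hq (by omega)⟩⟩
  exact (hq.mod_three_eq_two_or_mod_four_eq_three h12).elim (h3 q hq) (h4 q hq)
end
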